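/- arXiv:2206.04356 — 2 statements merged into one kernel-verified Lean document; each statement's English description precedes it below -/
import Mathlib

section
/- Let Y be a continuous random variable on [a,b] with continuous strictly increasing cdf F, and let Ŷ⁽ⁿ⁾ be the discretization of Y using n equidistant cutoffs of [a,b]. Then as n → ∞, the LS residual of Ŷ⁽ⁿ⁾ at the bin containing y converges to 2F(y) − 1 for every y in (a,b). -/
open Filter

/-- Let `Y` have continuous strictly increasing cdf `F` on `[a, b]` (`F a = 0`, `F b = 1`),
and discretize `[a, b]` into `n` equal bins. The LS residual of the discretized variable at the
bin containing `y`, which equals `F(cₖ) - (1 - F(cₖ₊₁))` where `[cₖ, cₖ₊₁)` is the bin of `y`,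
converges to `2 F(y) - 1` as `n → ∞`, for every `y ∈ (a, b)`. -/
theorem ls_residual_partial_copula_limit
    (a b : ℝ) (hab : a < b) (F : ℝ → ℝ) (hF : Continuous F)
    (hmono : StrictMonoOn F (Set.Icc a b)) (hFa : F a = 0) (hFb : F b = 1)
    (y : ℝ) (hy : y ∈ Set.Ioo a b) :
    Tendsto (fun n : ℕ =>
        F (a + (⌊(n : ℝ) * (y - a) / (b - a)⌋ : ℝ) * (b - a) / n)
          - (1 - F (a + ((⌊(n : ℝ) * (y - a) / (b - a)⌋ : ℝ) + 1) * (b - a) / n)))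
      atTop (nhds (2 * F y - 1)) := by
  have hba : (0:ℝ) < b - a := sub_pos.2 hab
  set t : ℝ := (y - a) / (b - a) with ht_def
  have ht : 0 ≤ t := div_nonneg (sub_nonneg.2 hy.1.le) hba.le
  -- floor over naturals tends to t
  have h0 : Tendsto (fun x : ℝ => (⌊t * x⌋₊ : ℝ) / x) atTop (nhds t) :=
    tendsto_nat_floor_mul_div_atTop ht
  have h1 : Tendsto (fun n : ℕ => (⌊(n : ℝ) * t⌋ : ℝ) / n) atTop (nhds t) := by
    have := h0.comp tendsto_natCast_atTop_atTop (f := fun n : ℕ => (n : ℝ))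
    refine this.congr' ?_
    filter_upwards [eventually_gt_atTop 0] with n _
    simp only [Function.comp]
    rw [natCast_floor_eq_intCast_floor (by positivity), mul_comm]
  have hfloor : Tendsto (fun n : ℕ => (⌊(n : ℝ) * t⌋ : ℝ) / n) atTop (nhds t) := h1
  have hty : a + t * (b - a) = y := by
    rw [ht_def, div_mul_cancel₀ _ hba.ne']
    ring
  have hc1 : Tendsto (fun n : ℕ => a + (⌊(n : ℝ) * t⌋ : ℝ) * (b - a) / n) atTop (nhds y) := by
    have : Tendsto (fun n : ℕ => a + ((⌊(n : ℝ) * t⌋ : ℝ) / n) * (b - a)) atTop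
        (nhds (a + t * (b - a))) := tendsto_const_nhds.add (hfloor.mul tendsto_const_nhds)
    rw [hty] at this
    refine this.congr fun n => ?_
    ring
  have hinv : Tendsto (fun n : ℕ => (b - a) / (n : ℝ)) atTop (nhds 0) := by
    simpa using tendsto_const_nhds.div_atTop
      (tendsto_natCast_atTop_atTop (R := ℝ)) (a := b - a)
  have hc2 : Tendsto (fun n : ℕ => a + ((⌊(n : ℝ) * t⌋ : ℝ) + 1) * (b - a) / n) atTop
      (nhds y) := by
    have : Tendsto (fun n : ℕ => (a + (⌊(n : ℝ) * t⌋ : ℝ) * (b - a) / n) + (b - a) / n)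
        atTop (nhds (y + 0)) := hc1.add hinv
    rw [add_zero] at this
    refine this.congr fun n => ?_
    ring
  have hF1 := (hF.tendsto y).comp hc1
  have hF2 := (hF.tendsto y).comp hc2
  have := hF1.sub ((tendsto_const_nhds (x := (1:ℝ)) (f := atTop (α := ℕ))).sub hF2)
  have key : F y - (1 - F y) = 2 * F y - 1 := by ring
  rw [key] at this
  refine this.congr fun n => ?_
  simp only [Function.comp]
  rw [ht_def]
  simp only [mul_div_assoc]
end

section
/- Let X ⫫ Y | Z with X categorical on {1,...,k} and Y ordinal, and define for each j ∈ {1,...,k−1} the product D_j = R_{I(X=j)} · R_Y of the conditional LS residuals of the indicator 1{X=j} and of Y given Z. Then the vector D = (D_1,...,D_{k−1}) has mean zero: E[D_j] = 0 for every j. -/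
/-!
Split the expectation of `D_j` over the cells `{Y = y, Z = z}`. On such a cell the residual
`R_Y` is the constant `RY y z`, so the cell contributes `RY y z * (P(X = j, y, z) - q_j(z) P(y, z))`,
and conditional independence says exactly that `P(X = j, y, z) = q_j(z) P(y, z)` whenever
`P(Z = z) ≠ 0`. On a null cell `RY y z` is a quotient by `P(Z = z) = 0`, hence `0`.
-/

open Finset

lemma div_mul_sub_div_mul_eq_zero {K : Type*} [Field K] {a u v m n : K}
    (h : u * n = v * m) : a / n * (u - v / n * m) = 0 := by
  rcases eq_or_ne n 0 with rfl | hn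
  · simp
  · rw [div_mul_eq_mul_div v n m, ← mul_div_cancel_right₀ u hn, ← sub_div, h, sub_self,
      zero_div, mul_zero]

lemma Finset.sum_eq_sum_image_sum_ite {Ω α M : Type*} [Fintype Ω] [DecidableEq α]
    [AddCommMonoid M] (V : Ω → α) (F : Ω → α → M) :
    ∑ ω, F ω (V ω) = ∑ v ∈ univ.image V, ∑ ω, if V ω = v then F ω v else 0 := by
  rw [← sum_fiberwise_of_maps_to (fun ω _ ↦ mem_image_of_mem V (mem_univ ω))]
  refine sum_congr rfl fun v _ ↦ ?_
  rw [sum_filter]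
  refine sum_congr rfl fun ω _ ↦ ?_
  split_ifs with h
  · rw [h]
  · rfl

lemma sum_ite_mul_indicator_sub_mul {Ω R : Type*} [Fintype Ω] [CommRing R]
    (P Q : Ω → Prop) [DecidablePred P] [DecidablePred Q] (w : Ω → R) (c a : R) :
    ∑ ω, (if P ω then w ω * (((if Q ω then (1 : R) else 0) - c) * a) else 0)
      = a * ((∑ ω, if Q ω ∧ P ω then w ω else 0) - c * ∑ ω, if P ω then w ω else 0) := by
  rw [mul_sum univ _ c, ← sum_sub_distrib, mul_sum]
  refine sum_congr rfl fun ω _ ↦ ?_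
  by_cases hP : P ω <;> by_cases hQ : Q ω <;> simp [hP, hQ] <;> ring

theorem indicator_ls_residual_product_zero_general
    {Ω γ : Type} [Fintype Ω] [DecidableEq γ] {k r : ℕ}
    (w : Ω → ℝ)
    (X : Ω → Fin k) (Y : Ω → Fin r) (Z : Ω → γ)
    (hCI : ∀ (x : Fin k) (y : Fin r) (z : γ),
      (∑ ω, if X ω = x ∧ Y ω = y ∧ Z ω = z then w ω else 0)
          * (∑ ω, if Z ω = z then w ω else 0)
        = (∑ ω, if X ω = x ∧ Z ω = z then w ω else 0)
          * (∑ ω, if Y ω = y ∧ Z ω = z then w ω else 0))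
    (q : Fin k → γ → ℝ)
    (hq : ∀ j z, q j z =
      (∑ ω, if X ω = j ∧ Z ω = z then w ω else 0) / (∑ ω, if Z ω = z then w ω else 0))
    (RY : Fin r → γ → ℝ)
    (hRY : ∀ y z, RY y z =
      ((∑ ω, if Y ω < y ∧ Z ω = z then w ω else 0)
        - (∑ ω, if y < Y ω ∧ Z ω = z then w ω else 0)) / (∑ ω, if Z ω = z then w ω else 0)) :
    ∀ j : Fin k,
      ∑ ω, w ω * (((if X ω = j then (1 : ℝ) else 0) - q j (Z ω)) * RY (Y ω) (Z ω)) = 0 := by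
  intro j
  refine (sum_eq_sum_image_sum_ite (fun ω ↦ (Y ω, Z ω))
    (fun ω v ↦ w ω * (((if X ω = j then (1 : ℝ) else 0) - q j v.2) * RY v.1 v.2))).trans ?_
  refine sum_eq_zero fun ⟨y, z⟩ _ ↦ ?_
  simp only [Prod.mk.injEq]
  rw [sum_ite_mul_indicator_sub_mul, hRY, hq]
  exact div_mul_sub_div_mul_eq_zero (hCI j y z)

/-- If `X ⫫ Y ∣ Z` with `X` categorical and `Y` ordinal, then each product
`D_j = (1{X = j} - P(X = j ∣ Z)) · R_Y` of the conditional residual of the indicator `1{X = j}`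
with the conditional LS residual of `Y` has mean zero. -/
theorem indicator_ls_residual_product_zero
    {Ω γ : Type} [Fintype Ω] [DecidableEq γ] {k r : ℕ}
    (w : Ω → ℝ) (hw : ∀ ω, 0 ≤ w ω) (hw1 : ∑ ω, w ω = 1)
    (X : Ω → Fin k) (Y : Ω → Fin r) (Z : Ω → γ)
    (hCI : ∀ (x : Fin k) (y : Fin r) (z : γ),
      (∑ ω, if X ω = x ∧ Y ω = y ∧ Z ω = z then w ω else 0)
          * (∑ ω, if Z ω = z then w ω else 0)
        = (∑ ω, if X ω = x ∧ Z ω = z then w ω else 0)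
          * (∑ ω, if Y ω = y ∧ Z ω = z then w ω else 0))
    (q : Fin k → γ → ℝ)
    (hq : ∀ j z, q j z =
      (∑ ω, if X ω = j ∧ Z ω = z then w ω else 0) / (∑ ω, if Z ω = z then w ω else 0))
    (RY : Fin r → γ → ℝ)
    (hRY : ∀ y z, RY y z =
      ((∑ ω, if Y ω < y ∧ Z ω = z then w ω else 0)
        - (∑ ω, if y < Y ω ∧ Z ω = z then w ω else 0)) / (∑ ω, if Z ω = z then w ω else 0)) :
    ∀ j : Fin k,
      ∑ ω, w ω * (((if X ω = j then (1 : ℝ) else 0) - q j (Z ω)) * RY (Y ω) (Z ω)) = 0 :=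
  indicator_ls_residual_product_zero_general w X Y Z hCI q hq RY hRY
end
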